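/- arXiv:1805.02050 — 5 statements merged into one kernel-verified Lean document; each statement's English description precedes it below -/
import Mathlib

section
/- Let f : (0,∞) → ℝ be a strictly convex function, and let a₁, a₂, b₁, b₂ ∈ [0,∞) with a₁ + a₂ > 0 and b₁ + b₂ > 0. Suppose (b₁+b₂)·f((a₁+a₂)/(b₁+b₂)) = b₁·f(a₁/b₁) + b₂·f(a₂/b₂), where the perspective expression b·f(a/b) is interpreted by the conventions b·f(0/b) = f(0⁺)·b for b ≥ 0 and 0·f(a/0) = f'(∞)·a for a > 0 (with (+∞)·0 = 0). Then there exists k > 0 such that (a₁,a₂) = k·(b₁,b₂). -/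
open Filter Set

/-- The perspective expression `b·f(a/b)` with values in `(-∞,+∞]`, using the conventions
`b·f(0/b) = f(0⁺)·b` for `b ≥ 0` and `0·f(a/0) = f'(∞)·a` for `a > 0`
(with `(+∞)·0 = 0`). Here `f0` plays the role of `f(0⁺)` and `finf` of `f'(∞)`. -/
noncomputable def perspective (f : ℝ → ℝ) (f0 finf : EReal) (a b : ℝ) : EReal :=
  if 0 < b then
    (if 0 < a then ((b * f (a / b) : ℝ) : EReal) else f0 * (b : EReal))
  else finf * (a : EReal)

/-!
The perspective of a strictly convex function is strictly subadditive away from proportional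
pairs. When `b₁, b₂ > 0`, additivity is the equality case of Jensen's inequality for the extension
of `f` to `[0, ∞)` by `f(0⁺)`, which is still strictly convex. When `b₁ = 0 < a₁`, the term
`f'(∞)·a₁` strictly exceeds `b₂·f((a₁+a₂)/b₂) - b₂·f(a₂/b₂)`, because every secant slope of a
strictly convex function lies strictly below its asymptotic slope.
-/

open Function Topology

section Convex

variable {f g : ℝ → ℝ} {r : ℝ}

theorem ConvexOn.slope_le_of_tendsto_div_atTop {w z : ℝ} (hg : ConvexOn ℝ (Ici w) g)
    (hlim : Tendsto (fun t => g t / t) atTop (𝓝 r)) (hwz : w < z) :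
    (g z - g w) / (z - w) ≤ r := by
  set s := (g z - g w) / (z - w)
  have hbound : ∀ᶠ t in atTop, (g w - s * w) / t + s ≤ g t / t := by
    filter_upwards [eventually_gt_atTop (max z 0)] with t ht
    have htz : z < t := (le_max_left z 0).trans_lt ht
    have ht0 : 0 < t := (le_max_right z 0).trans_lt ht
    have hst : s ≤ (g t - g w) / (t - w) :=
      hg.secant_mono self_mem_Ici (mem_Ici.2 hwz.le) (mem_Ici.2 (hwz.trans htz).le) hwz.ne'
        (hwz.trans htz).ne' htz.le
    rw [le_div_iff₀ (sub_pos.2 (hwz.trans htz))] at hst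
    rw [div_add' _ _ _ ht0.ne', div_le_div_iff_of_pos_right ht0]
    linarith
  have hlim' : Tendsto (fun t => (g w - s * w) / t + s) atTop (𝓝 s) := by
    simpa using (tendsto_const_nhds.div_atTop tendsto_id).add_const s
  exact le_of_tendsto_of_tendsto hlim' hlim hbound

theorem StrictConvexOn.lt_add_mul_of_tendsto_div_atTop {y d : ℝ}
    (hg : StrictConvexOn ℝ (Ici y) g) (hlim : Tendsto (fun t => g t / t) atTop (𝓝 r))
    (hd : 0 < d) : g (y + d) < g y + d * r := by
  have hslope : (g (y + d) - g y) / (y + d - y) < r :=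
    calc (g (y + d) - g y) / (y + d - y)
        < (g (y + d + 1) - g (y + d)) / (y + d + 1 - (y + d)) :=
          hg.slope_strict_mono_adjacent self_mem_Ici (mem_Ici.2 (by linarith)) (by linarith)
            (by linarith)
      _ ≤ r := by
          refine ConvexOn.slope_le_of_tendsto_div_atTop ?_ hlim (by linarith)
          exact hg.convexOn.subset (Ici_subset_Ici.2 (by linarith)) (convex_Ici _)
  rw [add_sub_cancel_left, div_lt_iff₀ hd] at hslope
  linarith

theorem StrictConvexOn.update_zero_of_tendsto {r₀ : ℝ} (hf : StrictConvexOn ℝ (Ioi 0) f)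
    (h0 : Tendsto f (𝓝[>] 0) (𝓝 r₀)) : StrictConvexOn ℝ (Ici 0) (update f 0 r₀) := by
  refine strictConvexOn_of_slope_strict_mono_adjacent (convex_Ici 0) fun {x y z} hx _ hxy hyz => ?_
  have hy : 0 < y := (mem_Ici.1 hx).trans_lt hxy
  have hz : 0 < z := hy.trans hyz
  rw [update_of_ne hy.ne', update_of_ne hz.ne']
  rcases (mem_Ici.1 hx).eq_or_lt with rfl | hx
  · rw [update_self]
    -- the slope from `0` is the limit of the slopes from `t ↓ 0`, all bounded by the slope to
    -- some `m ∈ (y, z)`, which is strictly smaller than the slope to `z`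
    obtain ⟨m, hym, hmz⟩ := exists_between hyz
    have hlim : Tendsto (fun t => (f y - f t) / (y - t)) (𝓝[>] 0) (𝓝 ((f y - r₀) / (y - 0))) :=
      (tendsto_const_nhds.sub h0).div
        (tendsto_const_nhds.sub (tendsto_id.mono_left nhdsWithin_le_nhds)) (by simpa using hy.ne')
    calc (f y - r₀) / (y - 0) ≤ (f m - f y) / (m - y) := by
          refine le_of_tendsto hlim ?_
          filter_upwards [Ioo_mem_nhdsGT hy] with t ht
          exact hf.convexOn.slope_mono_adjacent ht.1 (mem_Ioi.2 (hy.trans hym)) ht.2 hym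
      _ < (f z - f y) / (z - y) :=
          hf.secant_strict_mono hy (mem_Ioi.2 (hy.trans hym)) hz hym.ne' hyz.ne' hmz
  · rw [update_of_ne hx.ne']
    exact hf.slope_strict_mono_adjacent hx hz hxy hyz

theorem StrictConvexOn.div_eq_div_of_perspective_add_eq {s : Set ℝ} {a₁ a₂ b₁ b₂ : ℝ}
    (hg : StrictConvexOn ℝ s g) (h₁ : a₁ / b₁ ∈ s) (h₂ : a₂ / b₂ ∈ s) (hb₁ : 0 < b₁)
    (hb₂ : 0 < b₂)
    (heq : (b₁ + b₂) * g ((a₁ + a₂) / (b₁ + b₂)) = b₁ * g (a₁ / b₁) + b₂ * g (a₂ / b₂)) :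
    a₁ / b₁ = a₂ / b₂ := by
  by_contra hne
  have hb : 0 < b₁ + b₂ := add_pos hb₁ hb₂
  have hlt := hg.2 h₁ h₂ hne (div_pos hb₁ hb) (div_pos hb₂ hb) (by field_simp)
  have hmid : b₁ / (b₁ + b₂) * (a₁ / b₁) + b₂ / (b₁ + b₂) * (a₂ / b₂) = (a₁ + a₂) / (b₁ + b₂) := by
    field_simp
  simp only [smul_eq_mul] at hlt
  rw [hmid, ← mul_lt_mul_iff_of_pos_left hb] at hlt
  have hrhs : (b₁ + b₂) * (b₁ / (b₁ + b₂) * g (a₁ / b₁) + b₂ / (b₁ + b₂) * g (a₂ / b₂))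
      = b₁ * g (a₁ / b₁) + b₂ * g (a₂ / b₂) := by field_simp
  linarith

end Convex

section Perspective

variable {f : ℝ → ℝ} {f0 finf : EReal} {a b : ℝ}

theorem perspective_of_pos (ha : 0 < a) (hb : 0 < b) :
    perspective f f0 finf a b = ((b * f (a / b) : ℝ) : EReal) := by
  rw [perspective, if_pos hb, if_pos ha]

theorem perspective_ne_bot (hf0bot : f0 ≠ ⊥) (hfinfbot : finf ≠ ⊥) (ha : 0 ≤ a) (hb : 0 ≤ b) :
    perspective f f0 finf a b ≠ ⊥ := by
  unfold perspective
  split_ifs <;> simp [EReal.mul_ne_bot, *]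

/-- `update f 0 f0.toReal` is the extension of `f` to `0` by `f(0⁺)`, restricted to its effective
domain: when `f0 = ⊤` the junk value `⊤.toReal = 0` at `0` is excluded. -/
theorem strictConvexOn_update_zero_toReal (hf : StrictConvexOn ℝ (Ioi 0) f) (hf0bot : f0 ≠ ⊥)
    (hf0 : Tendsto (fun t => (f t : EReal)) (𝓝[>] 0) (𝓝 f0)) :
    StrictConvexOn ℝ (if f0 = ⊤ then Ioi 0 else Ici 0) (update f 0 f0.toReal) := by
  split_ifs with htop
  · exact hf.congr fun x hx => (update_of_ne (ne_of_gt hx) _ _).symm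
  · lift f0 to ℝ using ⟨htop, hf0bot⟩ with r₀
    exact hf.update_zero_of_tendsto (EReal.tendsto_coe.1 hf0)

theorem perspective_eq_coe_update_zero (hf0bot : f0 ≠ ⊥) (ha : 0 ≤ a) (hb : 0 < b)
    (htop : perspective f f0 finf a b ≠ ⊤) :
    a / b ∈ (if f0 = ⊤ then Ioi 0 else Ici 0) ∧
      perspective f f0 finf a b = ((b * update f 0 f0.toReal (a / b) : ℝ) : EReal) := by
  rcases ha.eq_or_lt with rfl | ha
  · rw [perspective, if_pos hb, if_neg (lt_irrefl 0)] at htop ⊢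
    have hf0top : f0 ≠ ⊤ := by
      rintro rfl
      exact htop (EReal.top_mul_coe_of_pos hb)
    lift f0 to ℝ using ⟨hf0top, hf0bot⟩ with r₀
    simp [mul_comm]
  · have hab : 0 < a / b := div_pos ha hb
    refine ⟨?_, by rw [perspective_of_pos ha hb, update_of_ne hab.ne']⟩
    split_ifs
    exacts [hab, hab.le]

theorem perspective_add_lt_perspective_zero_add (hf : StrictConvexOn ℝ (Ioi 0) f)
    (hf0bot : f0 ≠ ⊥) (hfinfbot : finf ≠ ⊥)
    (hf0 : Tendsto (fun t => (f t : EReal)) (𝓝[>] 0) (𝓝 f0))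
    (hfinf : Tendsto (fun t => ((f t / t : ℝ) : EReal)) atTop (𝓝 finf))
    {a₁ a₂ b : ℝ} (ha₁ : 0 < a₁) (ha₂ : 0 ≤ a₂) (hb : 0 < b) :
    perspective f f0 finf (a₁ + a₂) b
      < perspective f f0 finf a₁ 0 + perspective f f0 finf a₂ b := by
  rw [perspective_of_pos (by positivity) hb]
  by_cases hsum : perspective f f0 finf a₁ 0 + perspective f f0 finf a₂ b = ⊤
  · rw [hsum]
    exact EReal.coe_lt_top _
  obtain ⟨htop₁, htop₂⟩ := (EReal.add_ne_top_iff_ne_top₂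
    (perspective_ne_bot hf0bot hfinfbot ha₁.le le_rfl)
    (perspective_ne_bot hf0bot hfinfbot ha₂ hb.le)).1 hsum
  rw [perspective, if_neg (lt_irrefl 0)] at htop₁ ⊢
  have hfinftop : finf ≠ ⊤ := by
    rintro rfl
    exact htop₁ (EReal.top_mul_coe_of_pos ha₁)
  lift finf to ℝ using ⟨hfinftop, hfinfbot⟩ with r
  obtain ⟨hy, hP₂⟩ := perspective_eq_coe_update_zero hf0bot ha₂ hb htop₂
  set g := update f 0 f0.toReal
  have hgf {t : ℝ} (ht : t ≠ 0) : g t = f t := update_of_ne ht _ _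
  have hg : StrictConvexOn ℝ (Ici (a₂ / b)) g := by
    refine (strictConvexOn_update_zero_toReal hf hf0bot hf0).subset ?_ (convex_Ici _)
    split_ifs at hy ⊢
    exacts [Ici_subset_Ioi.2 hy, Ici_subset_Ici.2 hy]
  have hlim : Tendsto (fun t => g t / t) atTop (𝓝 r) := by
    refine (EReal.tendsto_coe.1 hfinf).congr' ?_
    filter_upwards [eventually_gt_atTop 0] with t ht
    rw [hgf ht.ne']
  have key := hg.lt_add_mul_of_tendsto_div_atTop hlim (div_pos ha₁ hb)
  have hsplit : (a₁ + a₂) / b = a₂ / b + a₁ / b := by ring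
  rw [hP₂, ← EReal.coe_mul, ← EReal.coe_add, EReal.coe_lt_coe_iff]
  calc b * f ((a₁ + a₂) / b) = b * g (a₂ / b + a₁ / b) := by
        rw [← hsplit, hgf (by positivity)]
    _ < b * (g (a₂ / b) + a₁ / b * r) := mul_lt_mul_of_pos_left key hb
    _ = r * a₁ + b * g (a₂ / b) := by field_simp; ring

theorem div_eq_div_of_perspective_add_eq (hf : StrictConvexOn ℝ (Ioi 0) f)
    (hf0bot : f0 ≠ ⊥) (hfinfbot : finf ≠ ⊥)
    (hf0 : Tendsto (fun t => (f t : EReal)) (𝓝[>] 0) (𝓝 f0))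
    {a₁ a₂ b₁ b₂ : ℝ} (ha₁ : 0 ≤ a₁) (ha₂ : 0 ≤ a₂) (hb₁ : 0 < b₁) (hb₂ : 0 < b₂)
    (ha : 0 < a₁ + a₂)
    (heq : perspective f f0 finf (a₁ + a₂) (b₁ + b₂)
        = perspective f f0 finf a₁ b₁ + perspective f f0 finf a₂ b₂) :
    a₁ / b₁ = a₂ / b₂ := by
  have hlhs : perspective f f0 finf (a₁ + a₂) (b₁ + b₂) ≠ ⊤ := by
    rw [perspective_of_pos ha (add_pos hb₁ hb₂)]
    exact EReal.coe_ne_top _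
  obtain ⟨htop₁, htop₂⟩ := (EReal.add_ne_top_iff_ne_top₂
    (perspective_ne_bot hf0bot hfinfbot ha₁ hb₁.le)
    (perspective_ne_bot hf0bot hfinfbot ha₂ hb₂.le)).1 (heq ▸ hlhs)
  obtain ⟨-, hP⟩ := perspective_eq_coe_update_zero hf0bot ha.le (add_pos hb₁ hb₂) hlhs
  obtain ⟨hx₁, hP₁⟩ := perspective_eq_coe_update_zero hf0bot ha₁ hb₁ htop₁
  obtain ⟨hx₂, hP₂⟩ := perspective_eq_coe_update_zero hf0bot ha₂ hb₂ htop₂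
  rw [hP, hP₁, hP₂, ← EReal.coe_add, EReal.coe_eq_coe_iff] at heq
  exact (strictConvexOn_update_zero_toReal hf hf0bot hf0).div_eq_div_of_perspective_add_eq
    hx₁ hx₂ hb₁ hb₂ heq

end Perspective

/-- If `f : (0,∞) → ℝ` is strictly convex, `a₁+a₂ > 0`, `b₁+b₂ > 0`, and the perspective
of `f` is additive at `((a₁,b₁),(a₂,b₂))`, i.e.
`(b₁+b₂)·f((a₁+a₂)/(b₁+b₂)) = b₁·f(a₁/b₁) + b₂·f(a₂/b₂)` with the boundary conventions,
then `(a₁,a₂) = k·(b₁,b₂)` for some `k > 0`. -/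
theorem perspective_additive_implies_proportional
    (f : ℝ → ℝ) (hf : StrictConvexOn ℝ (Set.Ioi 0) f)
    (f0 finf : EReal) (hf0bot : f0 ≠ ⊥) (hfinfbot : finf ≠ ⊥)
    (hf0 : Tendsto (fun t : ℝ => (f t : EReal)) (nhdsWithin 0 (Set.Ioi 0)) (nhds f0))
    (hfinf : Tendsto (fun t : ℝ => ((f t / t : ℝ) : EReal)) atTop (nhds finf))
    (a₁ a₂ b₁ b₂ : ℝ) (ha₁ : 0 ≤ a₁) (ha₂ : 0 ≤ a₂) (hb₁ : 0 ≤ b₁) (hb₂ : 0 ≤ b₂)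
    (ha : 0 < a₁ + a₂) (hb : 0 < b₁ + b₂)
    (heq : perspective f f0 finf (a₁ + a₂) (b₁ + b₂)
        = perspective f f0 finf a₁ b₁ + perspective f f0 finf a₂ b₂) :
    ∃ k : ℝ, 0 < k ∧ a₁ = k * b₁ ∧ a₂ = k * b₂ := by
  suffices h : ∃ k : ℝ, a₁ = k * b₁ ∧ a₂ = k * b₂ by
    obtain ⟨k, h₁, h₂⟩ := h
    refine ⟨k, pos_of_mul_pos_left (?_ : 0 < k * (b₁ + b₂)) hb.le, h₁, h₂⟩
    linarith
  have hstrict {a₁ a₂ b : ℝ} (ha₁ : 0 < a₁) (ha₂ : 0 ≤ a₂) (hb : 0 < b) :=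
    perspective_add_lt_perspective_zero_add hf hf0bot hfinfbot hf0 hfinf ha₁ ha₂ hb
  rcases hb₁.eq_or_lt with rfl | hb₁
  · rw [zero_add] at heq hb
    obtain rfl : a₁ = 0 := by
      by_contra h
      exact (hstrict (ha₁.lt_of_ne' h) ha₂ hb).ne heq
    exact ⟨a₂ / b₂, by simp, (div_mul_cancel₀ a₂ hb.ne').symm⟩
  rcases hb₂.eq_or_lt with rfl | hb₂
  · obtain rfl : a₂ = 0 := by
      by_contra h
      rw [add_zero, add_comm a₁, add_comm (perspective f f0 finf a₁ b₁)] at heq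
      exact (hstrict (ha₂.lt_of_ne' h) ha₁ hb₁).ne heq
    exact ⟨a₁ / b₁, (div_mul_cancel₀ a₁ hb₁.ne').symm, by simp⟩
  have hx := div_eq_div_of_perspective_add_eq hf hf0bot hfinfbot hf0 ha₁ ha₂ hb₁ hb₂ ha heq
  exact ⟨a₁ / b₁, (div_mul_cancel₀ a₁ hb₁.ne').symm, by rw [hx, div_mul_cancel₀ a₂ hb₂.ne']⟩
end

section
/- The function t ↦ −log t on (0,∞) admits the integral representation −log t = −(t−1) + ∫₀^∞ (t−1)²/((t+s)(1+s)²) ds for all t > 0. -/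
/-!
The function `F s = log (t + s) - log (1 + s) - (t - 1) / (1 + s)` is an antiderivative of the
integrand that tends to `0` at infinity, so the integral equals `-F 0 = (t - 1) - log t`.
-/

open MeasureTheory Set Filter Topology Real

noncomputable def negLogKernelAntideriv (t s : ℝ) : ℝ :=
  log (t + s) - log (1 + s) - (t - 1) / (1 + s)

lemma hasDerivAt_negLogKernelAntideriv {t s : ℝ} (hts : t + s ≠ 0) (hs : 1 + s ≠ 0) :
    HasDerivAt (negLogKernelAntideriv t) ((t - 1) ^ 2 / ((t + s) * (1 + s) ^ 2)) s := by
  have hlog_t : HasDerivAt (fun s ↦ log (t + s)) (t + s)⁻¹ s := by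
    simpa using ((hasDerivAt_id s).const_add t).log hts
  have hlog_one : HasDerivAt (fun s ↦ log (1 + s)) (1 + s)⁻¹ s := by
    simpa using ((hasDerivAt_id s).const_add 1).log hs
  have hfrac : HasDerivAt (fun s ↦ (t - 1) / (1 + s)) (-((t - 1) / (1 + s) ^ 2)) s := by
    simpa [div_eq_mul_inv] using
      (((hasDerivAt_id s).const_add 1).inv hs).const_mul (t - 1)
  refine ((hlog_t.sub hlog_one).sub hfrac).congr_deriv ?_
  field_simp
  ring

lemma tendsto_negLogKernelAntideriv_atTop (t : ℝ) :
    Tendsto (negLogKernelAntideriv t) atTop (𝓝 0) := by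
  unfold negLogKernelAntideriv
  have hfrac : Tendsto (fun s : ℝ ↦ (t - 1) / (1 + s)) atTop (𝓝 0) :=
    tendsto_const_nhds.div_atTop (tendsto_atTop_add_const_left _ 1 tendsto_id)
  have hratio : Tendsto (fun s : ℝ ↦ log (1 + (t - 1) / (1 + s))) atTop (𝓝 0) := by
    simpa [Function.comp_def] using (continuousAt_log one_ne_zero).tendsto.comp
      (by simpa using (tendsto_const_nhds (x := (1 : ℝ))).add hfrac)
  have hlog : Tendsto (fun s : ℝ ↦ log (t + s) - log (1 + s)) atTop (𝓝 0) := by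
    refine hratio.congr' ?_
    filter_upwards [eventually_gt_atTop (|t|)] with s hs
    have hts : 0 < t + s := by linarith [neg_abs_le t]
    have h1s : 0 < 1 + s := by linarith [abs_nonneg t]
    rw [← log_div hts.ne' h1s.ne']
    congr 1
    field_simp
    ring
  simpa using hlog.sub hfrac

/-- Integral representation of `-log` :
`−log t = −(t−1) + ∫₀^∞ (t−1)²/((t+s)(1+s)²) ds` for every `t > 0`. -/
theorem neg_log_integral_repr (t : ℝ) (ht : 0 < t) :
    -Real.log t
      = -(t - 1) + ∫ s in Ioi (0 : ℝ), (t - 1) ^ 2 / ((t + s) * (1 + s) ^ 2) := by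
  have hint : ∫ s in Ioi (0 : ℝ), (t - 1) ^ 2 / ((t + s) * (1 + s) ^ 2)
      = 0 - negLogKernelAntideriv t 0 := by
    refine integral_Ioi_of_hasDerivAt_of_nonneg' (fun s (hs : 0 ≤ s) ↦ ?_) (fun s (hs : 0 < s) ↦ ?_)
      (tendsto_negLogKernelAntideriv_atTop t)
    · exact hasDerivAt_negLogKernelAntideriv (by positivity) (by positivity)
    · positivity
  rw [hint, negLogKernelAntideriv, add_zero, add_zero, log_one, div_one]
  ring
end

section
/- Let (Ω, μ) be a σ-finite measure space, f : (0,∞) → ℝ convex, and φ, ψ ∈ L¹(Ω,μ) nonnegative. Define the classical f-divergence S_f(φ‖ψ) = ∫_{{φ>0}∩{ψ>0}} ψ·f(φ/ψ) dμ + f(0⁺)·∫_{{φ=0}} ψ dμ + f'(∞)·∫_{{ψ=0}} φ dμ, with values in (-∞,+∞]. Then S_f(φ‖ψ) ≥ (∫ψ dμ)·f((∫φ dμ)/(∫ψ dμ)) whenever ∫ψ dμ > 0. -/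
open MeasureTheory Set Filter ENNReal

/-- The extended-real-valued integral of a real function, with value in `(-∞,+∞]`
when the negative part is integrable. -/
noncomputable def eIntegral {Ω : Type*} [MeasurableSpace Ω] (μ : Measure Ω)
    (g : Ω → ℝ) : EReal :=
  ((∫⁻ x, ENNReal.ofReal (g x) ∂μ : ℝ≥0∞) : EReal)
    - ((∫⁻ x, ENNReal.ofReal (-(g x)) ∂μ : ℝ≥0∞) : EReal)

/-- The classical `f`-divergence
`S_f(φ‖ψ) = ∫_{{φ>0}∩{ψ>0}} ψ·f(φ/ψ) dμ + f(0⁺)·∫_{{φ=0}} ψ dμ + f'(∞)·∫_{{ψ=0}} φ dμ`,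
with values in `(-∞,+∞]`; here `f0` plays the role of `f(0⁺)` and `finf` of `f'(∞)`. -/
noncomputable def classicalFDiv {Ω : Type*} [MeasurableSpace Ω] (μ : Measure Ω)
    (f : ℝ → ℝ) (f0 finf : EReal) (φ ψ : Ω → ℝ) : EReal :=
  eIntegral μ (fun x => if 0 < φ x ∧ 0 < ψ x then ψ x * f (φ x / ψ x) else 0)
    + f0 * ((∫ x in {x | φ x = 0}, ψ x ∂μ : ℝ) : EReal)
    + finf * ((∫ x in {x | ψ x = 0}, φ x ∂μ : ℝ) : EReal)

open Topology

/-!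
Let `a + b t` be the supporting line of `f` at `m = ∫φ / ∫ψ`, with `b` the right derivative
of `f` at `m`. Being an affine minorant of `f` on `(0, ∞)`, its value at `0` is at most `f(0⁺)`
and its slope at most `f'(∞)`. Integrating `a ψ + b φ ≤ ψ f(φ/ψ)` over `{φ > 0, ψ > 0}` and
adding the two boundary terms therefore gives `S_f(φ‖ψ) ≥ a ∫ψ + b ∫φ = ∫ψ · f(m)`.
If `∫φ = 0` then `φ = 0` a.e. and both sides equal `f(0⁺) ∫ψ`.
-/

namespace ConvexOn

variable {S : Set ℝ} {f : ℝ → ℝ} {x t : ℝ}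

lemma add_rightDeriv_mul_sub_le (hf : ConvexOn ℝ S f) (hx : x ∈ interior S) (ht : t ∈ S) :
    f x + derivWithin f (Ioi x) x * (t - x) ≤ f t := by
  rcases lt_trichotomy t x with htx | rfl | hxt
  · have hslope : slope f t x ≤ derivWithin f (Ioi x) x :=
      (hf.slope_le_leftDeriv_of_mem_interior ht hx htx).trans
        (hf.leftDeriv_le_rightDeriv_of_mem_interior hx)
    rw [slope_def_field, div_le_iff₀ (sub_pos.2 htx)] at hslope
    nlinarith
  · simp
  · have hslope := hf.rightDeriv_le_slope_of_mem_interior hx ht hxt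
    rw [slope_def_field, le_div_iff₀ (sub_pos.2 hxt)] at hslope
    linarith

end ConvexOn

lemma coe_le_of_affine_le_of_tendsto_nhdsGT_zero {f : ℝ → ℝ} {a b : ℝ} {L : EReal}
    (hab : ∀ t > 0, a + b * t ≤ f t)
    (hf : Tendsto (fun t : ℝ => (f t : EReal)) (𝓝[>] 0) (𝓝 L)) : (a : EReal) ≤ L := by
  have hline : Tendsto (fun t : ℝ => ((a + b * t : ℝ) : EReal)) (𝓝[>] 0) (𝓝 (a : EReal)) := by
    have h := ((continuous_coe_real_ereal.comp
      (by fun_prop : Continuous fun t : ℝ => a + b * t)).tendsto 0).mono_left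
        (nhdsWithin_le_nhds (s := Ioi 0))
    simpa only [Function.comp_def, mul_zero, add_zero] using h
  refine le_of_tendsto_of_tendsto hline hf ?_
  filter_upwards [self_mem_nhdsWithin] with t ht
  exact EReal.coe_le_coe_iff.2 (hab t ht)

lemma coe_le_of_affine_le_of_tendsto_div_atTop {f : ℝ → ℝ} {a b : ℝ} {L : EReal}
    (hab : ∀ t > 0, a + b * t ≤ f t)
    (hf : Tendsto (fun t : ℝ => ((f t / t : ℝ) : EReal)) atTop (𝓝 L)) : (b : EReal) ≤ L := by
  have hline : Tendsto (fun t : ℝ => (((a + b * t) / t : ℝ) : EReal)) atTop (𝓝 (b : EReal)) := by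
    refine (continuous_coe_real_ereal.tendsto b).comp ?_
    have hlim : Tendsto (fun t : ℝ => a / t + b) atTop (𝓝 (0 + b)) :=
      (tendsto_const_nhds.div_atTop tendsto_id).add tendsto_const_nhds
    rw [zero_add] at hlim
    refine hlim.congr' ?_
    filter_upwards [eventually_gt_atTop 0] with t ht
    field_simp
  refine le_of_tendsto_of_tendsto hline hf ?_
  filter_upwards [eventually_gt_atTop 0] with t ht
  exact EReal.coe_le_coe_iff.2 ((div_le_div_iff_of_pos_right ht).2 (hab t ht))

section eIntegral

variable {Ω : Type*} [MeasurableSpace Ω] {μ : Measure Ω} {g h : Ω → ℝ}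

lemma eIntegral_mono (hgh : ∀ x, g x ≤ h x) : eIntegral μ g ≤ eIntegral μ h :=
  EReal.sub_le_sub
    (EReal.coe_ennreal_le_coe_ennreal_iff.2 <|
      lintegral_mono fun x => ENNReal.ofReal_le_ofReal (hgh x))
    (EReal.coe_ennreal_le_coe_ennreal_iff.2 <|
      lintegral_mono fun x => ENNReal.ofReal_le_ofReal (neg_le_neg (hgh x)))

lemma eIntegral_of_integrable (hg : Integrable g μ) :
    eIntegral μ g = ((∫ x, g x ∂μ : ℝ) : EReal) := by
  rw [integral_eq_lintegral_pos_part_sub_lintegral_neg_part hg, EReal.coe_sub,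
    EReal.coe_ennreal_toReal ((lintegral_ofReal_le_lintegral_enorm g).trans_lt hg.2).ne,
    EReal.coe_ennreal_toReal
      ((lintegral_ofReal_le_lintegral_enorm (fun x => -g x)).trans_lt hg.neg.2).ne,
    eIntegral]

end eIntegral

section classicalFDiv

variable {Ω : Type*} [MeasurableSpace Ω] {μ : Measure Ω} {f : ℝ → ℝ} {f0 finf : EReal}
  {φ ψ : Ω → ℝ}

lemma classicalFDiv_of_ae_eq_zero (hφ : φ =ᵐ[μ] 0) :
    classicalFDiv μ f f0 finf φ ψ = f0 * ((∫ x, ψ x ∂μ : ℝ) : EReal) := by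
  have hg : (fun x => if 0 < φ x ∧ 0 < ψ x then ψ x * f (φ x / ψ x) else 0) =ᵐ[μ] 0 :=
    hφ.mono fun x hx => by simp [hx]
  have hψ : ∫ x in {x | φ x = 0}, ψ x ∂μ = ∫ x, ψ x ∂μ := by
    congr 1
    exact Measure.restrict_eq_self_of_ae_mem (hφ.mono fun x hx => hx)
  have hφ' : ∫ x in {x | ψ x = 0}, φ x ∂μ = 0 := integral_eq_zero_of_ae (ae_restrict_of_ae hφ)
  rw [classicalFDiv, eIntegral_of_integrable ((integrable_zero Ω ℝ μ).congr hg.symm),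
    integral_eq_zero_of_ae hg, hψ, hφ']
  simp

lemma setIntegral_pos_pos_add_setIntegral_zero_eq_integral (hφm : Measurable φ)
    (hφ0 : ∀ x, 0 ≤ φ x) (hψ0 : ∀ x, 0 ≤ ψ x) (hψi : Integrable ψ μ) :
    ∫ x in {x | 0 < φ x ∧ 0 < ψ x}, ψ x ∂μ + ∫ x in {x | φ x = 0}, ψ x ∂μ = ∫ x, ψ x ∂μ := by
  have hdisj : Disjoint {x | 0 < φ x ∧ 0 < ψ x} {x | φ x = 0} :=
    disjoint_left.2 fun x hx hx0 => hx.1.ne' hx0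
  rw [← setIntegral_union hdisj (hφm (measurableSet_singleton 0)) hψi.integrableOn
    hψi.integrableOn]
  refine setIntegral_eq_integral_of_forall_compl_eq_zero fun x hx => ?_
  simp only [mem_union, mem_ofPred_eq, not_or, not_and, not_lt] at hx
  exact le_antisymm (hx.1 ((hφ0 x).lt_of_ne' hx.2)) (hψ0 x)

lemma coe_affine_le_classicalFDiv {a b : ℝ} (hab : ∀ t > 0, a + b * t ≤ f t)
    (ha : (a : EReal) ≤ f0) (hb : (b : EReal) ≤ finf)
    (hφm : Measurable φ) (hψm : Measurable ψ) (hφ0 : ∀ x, 0 ≤ φ x) (hψ0 : ∀ x, 0 ≤ ψ x)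
    (hφi : Integrable φ μ) (hψi : Integrable ψ μ) :
    (((a * ∫ x, ψ x ∂μ) + b * ∫ x, φ x ∂μ : ℝ) : EReal) ≤ classicalFDiv μ f f0 finf φ ψ := by
  set S := {x | 0 < φ x ∧ 0 < ψ x}
  have hS : MeasurableSet S :=
    (measurableSet_lt measurable_const hφm).inter (measurableSet_lt measurable_const hψm)
  have hψ_split : ∫ x in S, ψ x ∂μ + ∫ x in {x | φ x = 0}, ψ x ∂μ = ∫ x, ψ x ∂μ :=
    setIntegral_pos_pos_add_setIntegral_zero_eq_integral hφm hφ0 hψ0 hψi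
  have hφ_split : ∫ x in S, φ x ∂μ + ∫ x in {x | ψ x = 0}, φ x ∂μ = ∫ x, φ x ∂μ := by
    simpa only [S, and_comm] using
      setIntegral_pos_pos_add_setIntegral_zero_eq_integral hψm hψ0 hφ0 hφi
  have hint : (((∫ x in S, a * ψ x + b * φ x ∂μ) : ℝ) : EReal) ≤
      eIntegral μ (fun x => if 0 < φ x ∧ 0 < ψ x then ψ x * f (φ x / ψ x) else 0) := by
    rw [← integral_indicator hS, ← eIntegral_of_integrable
      (Integrable.indicator (f := fun x => a * ψ x + b * φ x)
        ((hψi.const_mul a).add (hφi.const_mul b)) hS)]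
    refine eIntegral_mono fun x => ?_
    by_cases hx : 0 < φ x ∧ 0 < ψ x
    · rw [indicator_of_mem (show x ∈ S from hx), if_pos hx]
      calc a * ψ x + b * φ x = ψ x * (a + b * (φ x / ψ x)) := by field_simp [hx.2.ne']
        _ ≤ ψ x * f (φ x / ψ x) :=
          mul_le_mul_of_nonneg_left (hab _ (div_pos hx.1 hx.2)) hx.2.le
    · rw [indicator_of_notMem (show x ∉ S from hx), if_neg hx]
  have hA : ((a * ∫ x in {x | φ x = 0}, ψ x ∂μ : ℝ) : EReal) ≤
      f0 * ((∫ x in {x | φ x = 0}, ψ x ∂μ : ℝ) : EReal) := by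
    rw [EReal.coe_mul]
    exact mul_le_mul_of_nonneg_right ha (EReal.coe_nonneg.2 (setIntegral_nonneg
      (hφm (measurableSet_singleton 0)) fun x _ => hψ0 x))
  have hB : ((b * ∫ x in {x | ψ x = 0}, φ x ∂μ : ℝ) : EReal) ≤
      finf * ((∫ x in {x | ψ x = 0}, φ x ∂μ : ℝ) : EReal) := by
    rw [EReal.coe_mul]
    exact mul_le_mul_of_nonneg_right hb (EReal.coe_nonneg.2 (setIntegral_nonneg
      (hψm (measurableSet_singleton 0)) fun x _ => hφ0 x))
  calc (((a * ∫ x, ψ x ∂μ) + b * ∫ x, φ x ∂μ : ℝ) : EReal)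
      = (((∫ x in S, a * ψ x + b * φ x ∂μ) : ℝ) : EReal)
          + ((a * ∫ x in {x | φ x = 0}, ψ x ∂μ : ℝ) : EReal)
          + ((b * ∫ x in {x | ψ x = 0}, φ x ∂μ : ℝ) : EReal) := by
        rw [← EReal.coe_add, ← EReal.coe_add, integral_add (hψi.const_mul a).integrableOn
          (hφi.const_mul b).integrableOn, integral_const_mul, integral_const_mul,
          ← hψ_split, ← hφ_split]
        congr 1
        ring
    _ ≤ classicalFDiv μ f f0 finf φ ψ := add_le_add (add_le_add hint hA) hB

end classicalFDiv

theorem classicalFDiv_ge_general (Ω : Type*) [MeasurableSpace Ω] (μ : Measure Ω)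
    (f : ℝ → ℝ) (hf : ConvexOn ℝ (Set.Ioi 0) f)
    (f0 finf : EReal)
    (hf0 : Tendsto (fun t : ℝ => (f t : EReal)) (nhdsWithin 0 (Set.Ioi 0)) (nhds f0))
    (hfinf : Tendsto (fun t : ℝ => ((f t / t : ℝ) : EReal)) atTop (nhds finf))
    (φ ψ : Ω → ℝ) (hφm : Measurable φ) (hψm : Measurable ψ)
    (hφ0 : ∀ x, 0 ≤ φ x) (hψ0 : ∀ x, 0 ≤ ψ x)
    (hφi : Integrable φ μ) (hψi : Integrable ψ μ) (hψpos : 0 < ∫ x, ψ x ∂μ) :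
    (if 0 < ∫ x, φ x ∂μ then
        (((∫ x, ψ x ∂μ) * f ((∫ x, φ x ∂μ) / (∫ x, ψ x ∂μ)) : ℝ) : EReal)
      else f0 * ((∫ x, ψ x ∂μ : ℝ) : EReal))
      ≤ classicalFDiv μ f f0 finf φ ψ := by
  split_ifs with hφpos
  · set m := (∫ x, φ x ∂μ) / ∫ x, ψ x ∂μ
    have hm : m ∈ interior (Ioi (0 : ℝ)) := by
      rw [interior_Ioi]; exact div_pos hφpos hψpos
    set c := derivWithin f (Ioi m) m
    have hsupp : ∀ t > 0, (f m - c * m) + c * t ≤ f t := fun t ht => by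
      linarith [hf.add_rightDeriv_mul_sub_le hm (mem_Ioi.2 ht)]
    have hIφ : ∫ x, φ x ∂μ = m * ∫ x, ψ x ∂μ := (div_mul_cancel₀ _ hψpos.ne').symm
    calc (((∫ x, ψ x ∂μ) * f m : ℝ) : EReal)
        = (((f m - c * m) * ∫ x, ψ x ∂μ) + c * ∫ x, φ x ∂μ : ℝ) := by
          rw [hIφ]; congr 1; ring
      _ ≤ classicalFDiv μ f f0 finf φ ψ :=
        coe_affine_le_classicalFDiv hsupp (coe_le_of_affine_le_of_tendsto_nhdsGT_zero hsupp hf0)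
          (coe_le_of_affine_le_of_tendsto_div_atTop hsupp hfinf) hφm hψm hφ0 hψ0 hφi hψi
  · have hφ : φ =ᵐ[μ] 0 := (integral_eq_zero_iff_of_nonneg hφ0 hφi).1
      (le_antisymm (not_lt.1 hφpos) (integral_nonneg hφ0))
    exact (classicalFDiv_of_ae_eq_zero hφ).ge

/-- Peierls–Bogoliubov / Jensen inequality for classical `f`-divergences:
`S_f(φ‖ψ) ≥ (∫ψ dμ)·f((∫φ dμ)/(∫ψ dμ))` whenever `∫ψ dμ > 0` (with the boundary
convention `(∫ψ)·f(0⁺)` if `∫φ dμ = 0`). -/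
theorem classicalFDiv_ge (Ω : Type*) [MeasurableSpace Ω] (μ : Measure Ω)
    [SigmaFinite μ] (f : ℝ → ℝ) (hf : ConvexOn ℝ (Set.Ioi 0) f)
    (f0 finf : EReal) (hf0bot : f0 ≠ ⊥) (hfinfbot : finf ≠ ⊥)
    (hf0 : Tendsto (fun t : ℝ => (f t : EReal)) (nhdsWithin 0 (Set.Ioi 0)) (nhds f0))
    (hfinf : Tendsto (fun t : ℝ => ((f t / t : ℝ) : EReal)) atTop (nhds finf))
    (φ ψ : Ω → ℝ) (hφm : Measurable φ) (hψm : Measurable ψ)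
    (hφ0 : ∀ x, 0 ≤ φ x) (hψ0 : ∀ x, 0 ≤ ψ x)
    (hφi : Integrable φ μ) (hψi : Integrable ψ μ) (hψpos : 0 < ∫ x, ψ x ∂μ) :
    (if 0 < ∫ x, φ x ∂μ then
        (((∫ x, ψ x ∂μ) * f ((∫ x, φ x ∂μ) / (∫ x, ψ x ∂μ)) : ℝ) : EReal)
      else f0 * ((∫ x, ψ x ∂μ : ℝ) : EReal))
      ≤ classicalFDiv μ f f0 finf φ ψ :=
  classicalFDiv_ge_general Ω μ f hf f0 finf hf0 hfinf φ ψ hφm hψm hφ0 hψ0 hφi hψi hψpos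
end

section
/- Let (Ω, μ) be a σ-finite measure space, f : (0,∞) → ℝ convex, and φ, ψ ∈ L¹(Ω,μ) nonnegative with ∫φ dμ = ∫ψ dμ = 1 and f(1) = 0. Then S_f(φ‖ψ) ≥ 0, and if f is strictly convex then S_f(φ‖ψ) = 0 implies φ = ψ μ-almost everywhere. -/
open MeasureTheory Set Filter ENNReal

open Topology

/-!
Let `c` be the right derivative of `f` at `1`, so that `c (t - 1) ≤ f t` for `t > 0`. On
`{φ > 0, ψ > 0}` this gives `ψ f(φ/ψ) ≥ c (φ - ψ)`, and since `φ` and `ψ` have the same mass,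
`S_f(φ‖ψ) = D + (f(0⁺) + c) A + (f'(∞) - c) B`, where `D ≥ 0` is the integral of the excess
`ψ f(φ/ψ) - c (φ - ψ)`, `A = ∫_{φ=0} ψ` and `B = ∫_{ψ=0} φ`. Secants of `f` through `1` give
`f(0⁺) ≥ -slope f 1 (1/2) ≥ -c` and `f'(∞) ≥ slope f 1 2 ≥ c`, so every term is nonnegative.
For strictly convex `f` these inequalities are strict and the excess vanishes only where `φ = ψ`,
so `S_f(φ‖ψ) = 0` forces `D = A = B = 0`, that is, `φ = ψ` almost everywhere.
-/

section ConvexFunction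

variable {S : Set ℝ} {f : ℝ → ℝ} {x y t : ℝ}

lemma ConvexOn.slope_le_rightDeriv_of_mem_interior (hf : ConvexOn ℝ S f) (hx : x ∈ interior S)
    (hy : y ∈ S) (hyx : y < x) : slope f x y ≤ derivWithin f (Ioi x) x :=
  slope_comm f x y ▸ (hf.slope_le_leftDeriv_of_mem_interior hy hx hyx).trans
    (hf.leftDeriv_le_rightDeriv_of_mem_interior hx)

lemma StrictConvexOn.slope_lt_rightDeriv_of_mem_interior (hf : StrictConvexOn ℝ S f)
    (hx : x ∈ interior S) (hy : y ∈ S) (hyx : y < x) : slope f x y < derivWithin f (Ioi x) x :=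
  slope_comm f x y ▸ (hf.slope_lt_leftDeriv hy (interior_subset hx) hyx
    (hf.convexOn.differentiableWithinAt_Iio_of_mem_interior hx)).trans_le
    (hf.convexOn.leftDeriv_le_rightDeriv_of_mem_interior hx)

lemma StrictConvexOn.rightDeriv_lt_slope_of_mem_interior (hf : StrictConvexOn ℝ S f)
    (hx : x ∈ interior S) (hy : y ∈ S) (hxy : x < y) : derivWithin f (Ioi x) x < slope f x y :=
  hf.rightDeriv_lt_slope (interior_subset hx) hy hxy
    (hf.convexOn.differentiableWithinAt_Ioi_of_mem_interior hx)

lemma eq_add_slope_mul_sub (f : ℝ → ℝ) (x t : ℝ) : f t = f x + slope f x t * (t - x) := by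
  have := sub_smul_slope f x t
  simp only [smul_eq_mul, vsub_eq_sub] at this
  linarith

lemma ConvexOn.add_rightDeriv_mul_sub_le_s10 (hf : ConvexOn ℝ S f) (hx : x ∈ interior S)
    (ht : t ∈ S) : f x + derivWithin f (Ioi x) x * (t - x) ≤ f t := by
  rw [eq_add_slope_mul_sub f x t]
  rcases lt_trichotomy t x with htx | rfl | hxt
  · nlinarith [hf.slope_le_rightDeriv_of_mem_interior hx ht htx]
  · simp
  · nlinarith [hf.rightDeriv_le_slope_of_mem_interior hx ht hxt]

lemma StrictConvexOn.add_rightDeriv_mul_sub_lt (hf : StrictConvexOn ℝ S f)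
    (hx : x ∈ interior S) (ht : t ∈ S) (htx : t ≠ x) :
    f x + derivWithin f (Ioi x) x * (t - x) < f t := by
  rw [eq_add_slope_mul_sub f x t]
  rcases htx.lt_or_gt with htx | hxt
  · nlinarith [hf.slope_lt_rightDeriv_of_mem_interior hx ht htx]
  · nlinarith [hf.rightDeriv_lt_slope_of_mem_interior hx ht hxt]

lemma ConvexOn.add_slope_mul_sub_le_of_le_of_lt (hf : ConvexOn ℝ S f) (hx : x ∈ S) (ht : t ∈ S)
    (hty : t ≤ y) (hyx : y < x) : f x + slope f x y * (t - x) ≤ f t := by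
  have hy : y ∈ S := hf.1.ordConnected.out ht hx ⟨hty, hyx.le⟩
  have := hf.slope_mono hx ⟨ht, (hty.trans_lt hyx).ne⟩ ⟨hy, hyx.ne⟩ hty
  rw [eq_add_slope_mul_sub f x t]
  nlinarith

lemma ConvexOn.add_slope_mul_sub_le_of_lt_of_le (hf : ConvexOn ℝ S f) (hx : x ∈ S) (ht : t ∈ S)
    (hxy : x < y) (hyt : y ≤ t) : f x + slope f x y * (t - x) ≤ f t := by
  have hy : y ∈ S := hf.1.ordConnected.out hx ht ⟨hxy.le, hyt⟩
  have := hf.slope_mono hx ⟨hy, hxy.ne'⟩ ⟨ht, (hxy.trans_le hyt).ne'⟩ hyt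
  rw [eq_add_slope_mul_sub f x t]
  nlinarith

lemma ConvexOn.coe_sub_slope_mul_le_of_tendsto_nhdsGT_zero (hf : ConvexOn ℝ (Ioi 0) f)
    (hy : 0 < y) (hyx : y < x) {L : EReal}
    (hL : Tendsto (fun t ↦ (f t : EReal)) (𝓝[>] 0) (𝓝 L)) :
    ((f x - slope f x y * x : ℝ) : EReal) ≤ L := by
  have hlim : Tendsto (fun t : ℝ ↦ ((f x + slope f x y * (t - x) : ℝ) : EReal)) (𝓝[>] 0)
      (𝓝 ((f x - slope f x y * x : ℝ) : EReal)) := by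
    refine EReal.tendsto_coe.2 (Tendsto.mono_left ?_ nhdsWithin_le_nhds)
    exact (by fun_prop : Continuous fun t : ℝ ↦ f x + slope f x y * (t - x)).tendsto' 0 _
      (by ring)
  refine le_of_tendsto_of_tendsto hlim hL ?_
  filter_upwards [Ioo_mem_nhdsGT hy] with t ht
  exact EReal.coe_le_coe_iff.2 <|
    hf.add_slope_mul_sub_le_of_le_of_lt (hy.trans hyx) ht.1 ht.2.le hyx

lemma ConvexOn.coe_slope_le_of_tendsto_div_atTop (hf : ConvexOn ℝ (Ioi 0) f)
    (hx : 0 < x) (hxy : x < y) {L : EReal}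
    (hL : Tendsto (fun t ↦ ((f t / t : ℝ) : EReal)) atTop (𝓝 L)) :
    (slope f x y : EReal) ≤ L := by
  have hlim : Tendsto (fun t : ℝ ↦ ((slope f x y + (f x - slope f x y * x) / t : ℝ) : EReal))
      atTop (𝓝 (slope f x y : EReal)) := by
    refine EReal.tendsto_coe.2 ?_
    simpa using (tendsto_const_nhds (x := slope f x y)).add
      ((tendsto_const_nhds (x := f x - slope f x y * x)).div_atTop tendsto_id)
  refine le_of_tendsto_of_tendsto hlim hL ?_
  filter_upwards [eventually_ge_atTop y] with t hyt
  have ht : 0 < t := by linarith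
  rw [EReal.coe_le_coe_iff, add_div' _ _ _ ht.ne', div_le_div_iff_of_pos_right ht]
  linarith [hf.add_slope_mul_sub_le_of_lt_of_le hx (show t ∈ Ioi 0 from ht) hxy hyt]

end ConvexFunction

lemma ofReal_add_add_ofReal_neg {a b : ℝ} (ha : 0 ≤ a) :
    ENNReal.ofReal (a + b) + ENNReal.ofReal (-b) =
      ENNReal.ofReal a + ENNReal.ofReal (-(a + b)) + ENNReal.ofReal b := by
  rw [← ENNReal.toReal_eq_toReal_iff' (by finiteness) (by finiteness)]
  simp only [ENNReal.toReal_add, ENNReal.ofReal_ne_top, ne_eq, not_false_eq_true,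
    ENNReal.toReal_ofReal', ENNReal.add_ne_top, and_self]
  grind

lemma EReal.coe_ennreal_sub_eq_of_add_eq {p n d n' p' : ℝ≥0∞} (hn : n ≠ ⊤) (hn' : n' ≠ ⊤)
    (hp' : p' ≠ ⊤) (h : p + n' = d + n + p') :
    (p : EReal) - n = d + ((p'.toReal - n'.toReal : ℝ) : EReal) := by
  lift n to NNReal using hn
  lift n' to NNReal using hn'
  lift p' to NNReal using hp'
  rcases eq_or_ne d ⊤ with rfl | hd
  · obtain rfl : p = ⊤ := by simpa using h
    exact (EReal.top_add_coe _).symm ▸ EReal.top_sub_coe _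
  lift d to NNReal using hd
  lift p to NNReal using (by rintro rfl; simp at h; exact ENNReal.coe_ne_top h.symm)
  have : (p : ℝ) + n' = d + n + p' := by exact_mod_cast h
  simp only [EReal.coe_nnreal_eq_coe_real, ENNReal.coe_toReal]
  rw [← EReal.coe_sub, ← EReal.coe_add, EReal.coe_eq_coe_iff]
  linarith

lemma EReal.eq_zero_of_coe_ennreal_add_coe_le_zero {d : ℝ≥0∞} {r : ℝ} (hr : 0 ≤ r)
    (h : (d : EReal) + r ≤ 0) : d = 0 ∧ r = 0 := by
  have hd := EReal.coe_ennreal_nonneg d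
  have hr' : (0 : EReal) ≤ r := EReal.coe_nonneg.2 hr
  obtain ⟨hd0, hr0⟩ := (add_eq_zero_iff_of_nonneg hd hr').1 (h.antisymm (add_nonneg hd hr'))
  exact ⟨by exact_mod_cast hd0, by exact_mod_cast hr0⟩

lemma eIntegral_add_of_nonneg {Ω : Type*} [MeasurableSpace Ω] {μ : Measure Ω} {k h : Ω → ℝ}
    (hk : AEMeasurable k μ) (hk0 : 0 ≤ᵐ[μ] k) (hh : Integrable h μ) :
    eIntegral μ (fun x ↦ k x + h x) =
      ((∫⁻ x, ENNReal.ofReal (k x) ∂μ : ℝ≥0∞) : EReal) + ((∫ x, h x ∂μ : ℝ) : EReal) := by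
  have hPh : ∫⁻ x, ENNReal.ofReal (h x) ∂μ ≠ ⊤ :=
    ((lintegral_mono fun x ↦ Real.ofReal_le_enorm (h x)).trans_lt hh.2).ne
  have hNh : ∫⁻ x, ENNReal.ofReal (-h x) ∂μ ≠ ⊤ :=
    ((lintegral_mono fun x ↦ Real.ofReal_le_enorm (-h x)).trans_lt hh.neg.2).ne
  have hN : ∫⁻ x, ENNReal.ofReal (-(k x + h x)) ∂μ ≠ ⊤ :=
    ne_top_of_le_ne_top hNh <| lintegral_mono_ae <|
      hk0.mono fun x hx ↦ ENNReal.ofReal_le_ofReal (by simp only [Pi.zero_apply] at hx; linarith)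
  rw [eIntegral, integral_eq_lintegral_pos_part_sub_lintegral_neg_part hh]
  refine EReal.coe_ennreal_sub_eq_of_add_eq hN hNh hPh ?_
  have hNhm : AEMeasurable (fun x ↦ ENNReal.ofReal (-h x)) μ := hh.aemeasurable.neg.ennreal_ofReal
  rw [← lintegral_add_right' _ hNhm,
    lintegral_congr_ae (hk0.mono fun x hx ↦ ofReal_add_add_ofReal_neg hx),
    lintegral_add_right' _ hh.aemeasurable.ennreal_ofReal,
    lintegral_add_left' hk.ennreal_ofReal]

section Divergence

variable {Ω : Type*} {f : ℝ → ℝ} {c : ℝ} {φ ψ : Ω → ℝ}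

lemma mul_sub_le_mul_apply_div (hc : ∀ t, 0 < t → c * (t - 1) ≤ f t) {a b : ℝ} (ha : 0 < a)
    (hb : 0 < b) : c * (a - b) ≤ b * f (a / b) := by
  have : b * (c * (a / b - 1)) = c * (a - b) := by field_simp
  exact this ▸ mul_le_mul_of_nonneg_left (hc _ (div_pos ha hb)) hb.le

lemma mul_sub_lt_mul_apply_div (hc : ∀ t, 0 < t → t ≠ 1 → c * (t - 1) < f t) {a b : ℝ}
    (ha : 0 < a) (hb : 0 < b) (hab : a ≠ b) : c * (a - b) < b * f (a / b) := by
  have : b * (c * (a / b - 1)) = c * (a - b) := by field_simp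
  have hab' : a / b ≠ 1 := (div_eq_one_iff_eq hb.ne').not.2 hab
  exact this ▸ mul_lt_mul_of_pos_left (hc _ (div_pos ha hb) hab') hb

noncomputable def fDivGap (f : ℝ → ℝ) (c : ℝ) (φ ψ : Ω → ℝ) (x : Ω) : ℝ :=
  if 0 < φ x ∧ 0 < ψ x then ψ x * f (φ x / ψ x) - c * (φ x - ψ x) else 0

lemma fDivGap_nonneg (hc : ∀ t, 0 < t → c * (t - 1) ≤ f t) (x : Ω) : 0 ≤ fDivGap f c φ ψ x := by
  unfold fDivGap
  split_ifs with h
  · linarith [mul_sub_le_mul_apply_div hc h.1 h.2]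
  · rfl

variable [MeasurableSpace Ω] {μ : Measure Ω}

lemma measurableSet_pos_and_pos (hφm : Measurable φ) (hψm : Measurable ψ) :
    MeasurableSet {x | 0 < φ x ∧ 0 < ψ x} :=
  (measurableSet_lt measurable_const hφm).inter (measurableSet_lt measurable_const hψm)

lemma measurable_fDivGap (hfc : ContinuousOn f (Ioi 0)) (hφm : Measurable φ)
    (hψm : Measurable ψ) : Measurable (fDivGap f c φ ψ) := by
  classical
  have hf : Measurable ((Ioi 0).piecewise f 0) :=
    hfc.measurable_piecewise continuousOn_const measurableSet_Ioi
  have hgap : fDivGap f c φ ψ = fun x ↦ if 0 < φ x ∧ 0 < ψ x then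
      ψ x * (Ioi 0).piecewise f 0 (φ x / ψ x) - c * (φ x - ψ x) else 0 := by
    funext x
    simp only [fDivGap]
    split_ifs with h
    · rw [piecewise_eq_of_mem (Ioi 0) f 0 (show φ x / ψ x ∈ Ioi 0 from div_pos h.1 h.2)]
    · rfl
  rw [hgap]
  exact Measurable.ite (measurableSet_pos_and_pos hφm hψm) (by fun_prop) measurable_const

lemma setIntegral_pos_and_pos_eq_sub (hψm : Measurable ψ) (hφ0 : ∀ x, 0 ≤ φ x)
    (hψ0 : ∀ x, 0 ≤ ψ x) (hφi : Integrable φ μ) :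
    ∫ x in {x | 0 < φ x ∧ 0 < ψ x}, φ x ∂μ = ∫ x, φ x ∂μ - ∫ x in {x | ψ x = 0}, φ x ∂μ := by
  have hZ : MeasurableSet {x | ψ x = 0} := measurableSet_eq_fun hψm measurable_const
  rw [← setIntegral_compl hZ hφi]
  refine (setIntegral_eq_of_subset_of_forall_sdiff_eq_zero hZ.compl
    (fun x hx ↦ hx.2.ne') fun x ⟨hψx, hx⟩ ↦ ?_).symm
  have hψpos : 0 < ψ x := (hψ0 x).lt_of_ne' hψx
  exact ((hφ0 x).eq_or_lt.resolve_right fun hφpos ↦ hx ⟨hφpos, hψpos⟩).symm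

lemma classicalFDiv_eq_lintegral_fDivGap_add (hfc : ContinuousOn f (Ioi 0))
    (hc : ∀ t, 0 < t → c * (t - 1) ≤ f t) (f0 finf : EReal)
    (hφm : Measurable φ) (hψm : Measurable ψ) (hφ0 : ∀ x, 0 ≤ φ x) (hψ0 : ∀ x, 0 ≤ ψ x)
    (hφi : Integrable φ μ) (hψi : Integrable ψ μ) (hφψ : ∫ x, φ x ∂μ = ∫ x, ψ x ∂μ) :
    classicalFDiv μ f f0 finf φ ψ =
      ((∫⁻ x, ENNReal.ofReal (fDivGap f c φ ψ x) ∂μ : ℝ≥0∞) : EReal)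
        + ((c * (∫ x in {x | φ x = 0}, ψ x ∂μ - ∫ x in {x | ψ x = 0}, φ x ∂μ) : ℝ) : EReal)
        + f0 * ((∫ x in {x | φ x = 0}, ψ x ∂μ : ℝ) : EReal)
        + finf * ((∫ x in {x | ψ x = 0}, φ x ∂μ : ℝ) : EReal) := by
  set S := {x | 0 < φ x ∧ 0 < ψ x}
  have hS : MeasurableSet S := measurableSet_pos_and_pos hφm hψm
  have hsplit : (fun x ↦ if 0 < φ x ∧ 0 < ψ x then ψ x * f (φ x / ψ x) else 0) =
      fun x ↦ fDivGap f c φ ψ x + S.indicator (fun x ↦ c * (φ x - ψ x)) x := by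
    funext x
    by_cases h : 0 < φ x ∧ 0 < ψ x
    · simp only [fDivGap, if_pos h, indicator_of_mem (show x ∈ S from h)]
      ring
    · simp only [fDivGap, if_neg h, indicator_of_notMem (show x ∉ S from h), add_zero]
  have hφS := setIntegral_pos_and_pos_eq_sub (μ := μ) hψm hφ0 hψ0 hφi
  have hψS := setIntegral_pos_and_pos_eq_sub (μ := μ) hφm hψ0 hφ0 hψi
  simp only [and_comm (a := 0 < ψ _)] at hψS
  have hint : ∫ x, S.indicator (fun x ↦ c * (φ x - ψ x)) x ∂μ =
      c * (∫ x in {x | φ x = 0}, ψ x ∂μ - ∫ x in {x | ψ x = 0}, φ x ∂μ) := by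
    rw [integral_indicator hS, integral_const_mul,
      integral_sub hφi.integrableOn hψi.integrableOn, hφS, hψS, hφψ]
    ring
  have hHi : Integrable (S.indicator fun x ↦ c * (φ x - ψ x)) μ :=
    ((hφi.sub hψi).const_mul c).indicator hS
  rw [classicalFDiv, hsplit, eIntegral_add_of_nonneg
    (measurable_fDivGap hfc hφm hψm).aemeasurable (ae_of_all _ (fDivGap_nonneg hc)) hHi, hint]

lemma setIntegral_zeroSet_nonneg (hφm : Measurable φ) (hψ0 : ∀ x, 0 ≤ ψ x) :
    0 ≤ ∫ x in {x | φ x = 0}, ψ x ∂μ :=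
  setIntegral_nonneg (measurableSet_eq_fun hφm measurable_const) fun x _ ↦ hψ0 x

lemma lintegral_fDivGap_add_le_classicalFDiv (hfc : ContinuousOn f (Ioi 0))
    (hc : ∀ t, 0 < t → c * (t - 1) ≤ f t) {f0 finf : EReal} {ε : ℝ}
    (hf0 : ((-c + ε : ℝ) : EReal) ≤ f0) (hfinf : ((c + ε : ℝ) : EReal) ≤ finf)
    (hφm : Measurable φ) (hψm : Measurable ψ) (hφ0 : ∀ x, 0 ≤ φ x) (hψ0 : ∀ x, 0 ≤ ψ x)
    (hφi : Integrable φ μ) (hψi : Integrable ψ μ) (hφψ : ∫ x, φ x ∂μ = ∫ x, ψ x ∂μ) :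
    ((∫⁻ x, ENNReal.ofReal (fDivGap f c φ ψ x) ∂μ : ℝ≥0∞) : EReal)
        + ((ε * (∫ x in {x | φ x = 0}, ψ x ∂μ + ∫ x in {x | ψ x = 0}, φ x ∂μ) : ℝ) : EReal)
      ≤ classicalFDiv μ f f0 finf φ ψ := by
  rw [classicalFDiv_eq_lintegral_fDivGap_add hfc hc f0 finf hφm hψm hφ0 hψ0 hφi hψi hφψ,
    add_assoc, add_assoc]
  set A := ∫ x in {x | φ x = 0}, ψ x ∂μ
  set B := ∫ x in {x | ψ x = 0}, φ x ∂μ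
  have hA : (0 : EReal) ≤ A := EReal.coe_nonneg.2 (setIntegral_zeroSet_nonneg hφm hψ0)
  have hB : (0 : EReal) ≤ B := EReal.coe_nonneg.2 (setIntegral_zeroSet_nonneg hψm hφ0)
  calc _ = _ + (((c * (A - B) : ℝ) : EReal)
          + (((-c + ε : ℝ) : EReal) * A + ((c + ε : ℝ) : EReal) * B)) := by
        congr 1
        norm_cast
        ring
    _ ≤ _ := by gcongr

lemma ae_imp_eq_zero_of_setIntegral_eq_zero {s : Set Ω} {g : Ω → ℝ} (hs : MeasurableSet s)
    (hg0 : ∀ x, 0 ≤ g x) (hgi : IntegrableOn g s μ) (h : ∫ x in s, g x ∂μ = 0) :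
    ∀ᵐ x ∂μ, x ∈ s → g x = 0 :=
  (ae_restrict_iff' hs).1 <| (setIntegral_eq_zero_iff_of_nonneg_ae (ae_of_all _ hg0) hgi).1 h

lemma ae_eq_of_lintegral_fDivGap_eq_zero (hfc : ContinuousOn f (Ioi 0))
    (hc : ∀ t, 0 < t → t ≠ 1 → c * (t - 1) < f t)
    (hφm : Measurable φ) (hψm : Measurable ψ) (hφ0 : ∀ x, 0 ≤ φ x) (hψ0 : ∀ x, 0 ≤ ψ x)
    (hφi : Integrable φ μ) (hψi : Integrable ψ μ)
    (hgap : ∫⁻ x, ENNReal.ofReal (fDivGap f c φ ψ x) ∂μ = 0)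
    (hA : ∫ x in {x | φ x = 0}, ψ x ∂μ = 0) (hB : ∫ x in {x | ψ x = 0}, φ x ∂μ = 0) :
    φ =ᵐ[μ] ψ := by
  have hgap0 := (lintegral_eq_zero_iff (measurable_fDivGap hfc hφm hψm).ennreal_ofReal).1 hgap
  filter_upwards [hgap0, ae_imp_eq_zero_of_setIntegral_eq_zero
      (measurableSet_eq_fun hφm measurable_const) hψ0 hψi.integrableOn hA,
    ae_imp_eq_zero_of_setIntegral_eq_zero
      (measurableSet_eq_fun hψm measurable_const) hφ0 hφi.integrableOn hB]
    with x hx hψx hφx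
  rcases (hφ0 x).eq_or_lt with hφx' | hφpos
  · rw [← hφx', hψx hφx'.symm]
  rcases (hψ0 x).eq_or_lt with hψx' | hψpos
  · rw [← hψx', hφx hψx'.symm]
  by_contra hne
  have : fDivGap f c φ ψ x ≤ 0 := ENNReal.ofReal_eq_zero.1 hx
  rw [fDivGap, if_pos ⟨hφpos, hψpos⟩] at this
  linarith [mul_sub_lt_mul_apply_div hc hφpos hψpos hne]

lemma classicalFDiv_nonneg (hfc : ContinuousOn f (Ioi 0))
    (hc : ∀ t, 0 < t → c * (t - 1) ≤ f t) {f0 finf : EReal}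
    (hf0 : ((-c : ℝ) : EReal) ≤ f0) (hfinf : (c : EReal) ≤ finf)
    (hφm : Measurable φ) (hψm : Measurable ψ) (hφ0 : ∀ x, 0 ≤ φ x) (hψ0 : ∀ x, 0 ≤ ψ x)
    (hφi : Integrable φ μ) (hψi : Integrable ψ μ) (hφψ : ∫ x, φ x ∂μ = ∫ x, ψ x ∂μ) :
    0 ≤ classicalFDiv μ f f0 finf φ ψ := by
  have := lintegral_fDivGap_add_le_classicalFDiv (ε := 0) hfc hc (by simpa using hf0)
    (by simpa using hfinf) hφm hψm hφ0 hψ0 hφi hψi hφψ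
  exact (EReal.coe_ennreal_nonneg _).trans (by simpa using this)

lemma ae_eq_of_classicalFDiv_eq_zero (hfc : ContinuousOn f (Ioi 0))
    (hc : ∀ t, 0 < t → c * (t - 1) ≤ f t) (hcs : ∀ t, 0 < t → t ≠ 1 → c * (t - 1) < f t)
    {f0 finf : EReal} {ε : ℝ} (hε : 0 < ε)
    (hf0 : ((-c + ε : ℝ) : EReal) ≤ f0) (hfinf : ((c + ε : ℝ) : EReal) ≤ finf)
    (hφm : Measurable φ) (hψm : Measurable ψ) (hφ0 : ∀ x, 0 ≤ φ x) (hψ0 : ∀ x, 0 ≤ ψ x)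
    (hφi : Integrable φ μ) (hψi : Integrable ψ μ) (hφψ : ∫ x, φ x ∂μ = ∫ x, ψ x ∂μ)
    (h : classicalFDiv μ f f0 finf φ ψ = 0) : φ =ᵐ[μ] ψ := by
  have hA0 := setIntegral_zeroSet_nonneg (μ := μ) hφm hψ0
  have hB0 := setIntegral_zeroSet_nonneg (μ := μ) hψm hφ0
  obtain ⟨hD, hAB⟩ := EReal.eq_zero_of_coe_ennreal_add_coe_le_zero (by positivity) <|
    h ▸ lintegral_fDivGap_add_le_classicalFDiv hfc hc hf0 hfinf hφm hψm hφ0 hψ0 hφi hψi hφψ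
  obtain ⟨hA, hB⟩ := (add_eq_zero_iff_of_nonneg hA0 hB0).1
    ((mul_eq_zero.1 hAB).resolve_left hε.ne')
  exact ae_eq_of_lintegral_fDivGap_eq_zero hfc hcs hφm hψm hφ0 hψ0 hφi hψi hD hA hB

end Divergence

theorem classicalFDiv_nonneg_and_eq_zero_iff_general (Ω : Type*) [MeasurableSpace Ω]
    (μ : Measure Ω)
    (f : ℝ → ℝ) (hf : ConvexOn ℝ (Set.Ioi 0) f) (hf1 : f 1 = 0)
    (f0 finf : EReal)
    (hf0 : Tendsto (fun t : ℝ => (f t : EReal)) (nhdsWithin 0 (Set.Ioi 0)) (nhds f0))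
    (hfinf : Tendsto (fun t : ℝ => ((f t / t : ℝ) : EReal)) atTop (nhds finf))
    (φ ψ : Ω → ℝ) (hφm : Measurable φ) (hψm : Measurable ψ)
    (hφ0 : ∀ x, 0 ≤ φ x) (hψ0 : ∀ x, 0 ≤ ψ x)
    (hφi : Integrable φ μ) (hψi : Integrable ψ μ)
    (hφ1 : ∫ x, φ x ∂μ = 1) (hψ1 : ∫ x, ψ x ∂μ = 1) :
    0 ≤ classicalFDiv μ f f0 finf φ ψ ∧
    (StrictConvexOn ℝ (Set.Ioi 0) f → classicalFDiv μ f f0 finf φ ψ = 0 →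
      φ =ᵐ[μ] ψ) := by
  have h1 : (1 : ℝ) ∈ interior (Ioi 0) := by simp
  have hfc := hf.continuousOn isOpen_Ioi
  set c := derivWithin f (Ioi 1) 1
  set m := slope f 1 2⁻¹
  set M := slope f 1 2
  have hc (t : ℝ) (ht : 0 < t) : c * (t - 1) ≤ f t := by
    simpa [hf1] using hf.add_rightDeriv_mul_sub_le_s10 h1 (mem_Ioi.2 ht)
  have hf0m : ((-m : ℝ) : EReal) ≤ f0 := by
    simpa [hf1] using hf.coe_sub_slope_mul_le_of_tendsto_nhdsGT_zero (x := 1) (by norm_num)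
      (by norm_num) hf0
  have hfinfM : (M : EReal) ≤ finf :=
    hf.coe_slope_le_of_tendsto_div_atTop one_pos one_lt_two hfinf
  have hφψ := hφ1.trans hψ1.symm
  refine ⟨?_, fun hsc hzero ↦ ?_⟩
  · have hm : m ≤ c := hf.slope_le_rightDeriv_of_mem_interior h1 (by norm_num) (by norm_num)
    have hM : c ≤ M := hf.rightDeriv_le_slope_of_mem_interior h1 (by norm_num) (by norm_num)
    exact classicalFDiv_nonneg hfc hc (hf0m.trans' (EReal.coe_le_coe_iff.2 (by linarith)))
      (hfinfM.trans' (EReal.coe_le_coe_iff.2 hM)) hφm hψm hφ0 hψ0 hφi hψi hφψ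
  have hm : m < c := hsc.slope_lt_rightDeriv_of_mem_interior h1 (by norm_num) (by norm_num)
  have hM : c < M := hsc.rightDeriv_lt_slope_of_mem_interior h1 (by norm_num) (by norm_num)
  have hcs (t : ℝ) (ht : 0 < t) (ht1 : t ≠ 1) : c * (t - 1) < f t := by
    simpa [hf1] using hsc.add_rightDeriv_mul_sub_lt h1 (mem_Ioi.2 ht) ht1
  refine ae_eq_of_classicalFDiv_eq_zero hfc hc hcs (ε := min (c - m) (M - c))
    (lt_min (by linarith) (by linarith)) (hf0m.trans' (EReal.coe_le_coe_iff.2 ?_))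
    (hfinfM.trans' (EReal.coe_le_coe_iff.2 ?_)) hφm hψm hφ0 hψ0 hφi hψi hφψ hzero
  · linarith [min_le_left (c - m) (M - c)]
  · linarith [min_le_right (c - m) (M - c)]

/-- Strict positivity of the classical `f`-divergence: if `f` is convex with `f(1) = 0`
and `φ, ψ` are probability densities, then `S_f(φ‖ψ) ≥ 0`, and if `f` is strictly
convex then `S_f(φ‖ψ) = 0` implies `φ = ψ` a.e. -/
theorem classicalFDiv_nonneg_and_eq_zero_iff (Ω : Type*) [MeasurableSpace Ω]
    (μ : Measure Ω) [SigmaFinite μ]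
    (f : ℝ → ℝ) (hf : ConvexOn ℝ (Set.Ioi 0) f) (hf1 : f 1 = 0)
    (f0 finf : EReal) (hf0bot : f0 ≠ ⊥) (hfinfbot : finf ≠ ⊥)
    (hf0 : Tendsto (fun t : ℝ => (f t : EReal)) (nhdsWithin 0 (Set.Ioi 0)) (nhds f0))
    (hfinf : Tendsto (fun t : ℝ => ((f t / t : ℝ) : EReal)) atTop (nhds finf))
    (φ ψ : Ω → ℝ) (hφm : Measurable φ) (hψm : Measurable ψ)
    (hφ0 : ∀ x, 0 ≤ φ x) (hψ0 : ∀ x, 0 ≤ ψ x)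
    (hφi : Integrable φ μ) (hψi : Integrable ψ μ)
    (hφ1 : ∫ x, φ x ∂μ = 1) (hψ1 : ∫ x, ψ x ∂μ = 1) :
    0 ≤ classicalFDiv μ f f0 finf φ ψ ∧
    (StrictConvexOn ℝ (Set.Ioi 0) f → classicalFDiv μ f f0 finf φ ψ = 0 →
      φ =ᵐ[μ] ψ) :=
  classicalFDiv_nonneg_and_eq_zero_iff_general Ω μ f hf hf1 f0 finf hf0 hfinf φ ψ hφm hψm hφ0 hψ0
    hφi hψi hφ1 hψ1
end

section
/- Let f(t) = a + b(t−1) + c(t−1)² + d(t−1)²/t + ∫_{(0,∞)} (t−1)²/(t+s) dμ(s) for t ∈ (0,∞), where a,b ∈ ℝ, c,d ≥ 0 and μ is a positive measure on (0,∞) with ∫ 1/(1+s) dμ(s) < ∞. Then f(0⁺) = a − b + c + (+∞)·d + ∫_{(0,∞)} s^{-1} dμ(s) and f'(∞) = b + (+∞)·c + d + ∫_{(0,∞)} dμ(s), as elements of (-∞,+∞] (with (+∞)·0 = 0). -/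
/-!
Split `f` (resp. `f t / t`) into a part with a finite real limit and a nonnegative remainder,
the real value of a finite `ℝ≥0∞`-valued function `H`; then `f` converges in `EReal` to the
real limit plus the limit of `H`, which is computed in `ℝ≥0∞`. There the `(+∞)·d` and
`(+∞)·c` terms are limits of `ofReal d * ofReal ((t - 1)² / t)`, and the integral term
converges by Fatou's lemma, since the integrands never exceed their pointwise limit (`s⁻¹` as
`t → 0⁺`, `1` as `t → ∞`). Dominated convergence is of no use here, because the limit integral
may be infinite.
-/

open MeasureTheory Set Filter ENNReal Topology

namespace MeasureTheory

variable {α ι : Type*} [MeasurableSpace α] {μ : Measure α}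

theorem ae_gt_of_measure_Iic_eq_zero [LinearOrder α] {a : α} (h : μ (Iic a) = 0) :
    ∀ᵐ s ∂μ, a < s :=
  (measure_eq_zero_iff_ae_notMem.1 h).mono fun _ hs => not_le.1 hs

theorem tendsto_lintegral_of_tendsto_of_le {l : Filter ι} [l.NeBot] [l.IsCountablyGenerated]
    {F : ι → α → ℝ≥0∞} {f : α → ℝ≥0∞} (hF : ∀ i, AEMeasurable (F i) μ)
    (h_le : ∀ᶠ i in l, F i ≤ᵐ[μ] f)
    (h_lim : ∀ᵐ a ∂μ, Tendsto (fun i => F i a) l (𝓝 (f a))) :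
    Tendsto (fun i => ∫⁻ a, F i a ∂μ) l (𝓝 (∫⁻ a, f a ∂μ)) :=
  tendsto_of_le_liminf_of_limsup_le
    (calc ∫⁻ a, f a ∂μ = ∫⁻ a, liminf (fun i => F i a) l ∂μ :=
          lintegral_congr_ae <| h_lim.mono fun _ h => h.liminf_eq.symm
      _ ≤ liminf (fun i => ∫⁻ a, F i a ∂μ) l := lintegral_liminf_le' hF)
    (limsup_le_of_le (h := h_le.mono fun _ h => lintegral_mono_ae h))

end MeasureTheory

theorem EReal.top_mul_coe_of_nonneg {x : ℝ} (hx : 0 ≤ x) :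
    (⊤ : EReal) * x = ((ENNReal.ofReal x * ⊤ : ℝ≥0∞) : EReal) := by
  rw [EReal.coe_ennreal_mul, EReal.coe_ennreal_ofReal, max_eq_left hx,
    EReal.coe_ennreal_top, mul_comm]

theorem EReal.tendsto_coe_add_toReal {ι : Type*} {l : Filter ι} {u g : ι → ℝ} {H : ι → ℝ≥0∞}
    {x : ℝ} {L : ℝ≥0∞} (hg : Tendsto g l (𝓝 x)) (hH : Tendsto H l (𝓝 L))
    (hu : ∀ᶠ i in l, H i ≠ ⊤ ∧ u i = g i + (H i).toReal) :
    Tendsto (fun i => (u i : EReal)) l (𝓝 (x + L)) := by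
  have hsum : Tendsto (fun i => (g i : EReal) + H i) l (𝓝 (x + L)) :=
    (EReal.continuousAt_add (Or.inl (EReal.coe_ne_top x))
      (Or.inl (EReal.coe_ne_bot x))).tendsto.comp
        ((continuous_coe_real_ereal.tendsto x).comp hg |>.prodMk_nhds
          ((continuous_coe_ennreal_ereal.tendsto L).comp hH))
  refine hsum.congr' (hu.mono fun i ⟨hfin, hi⟩ => ?_)
  simp only [hi, EReal.coe_add, EReal.coe_ennreal_toReal hfin]

section IntegralRepresentation

variable {μ : Measure ℝ}

theorem lintegral_ofReal_div_add_lt_top (hsupp : μ (Iic 0) = 0)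
    (hμ : ∫⁻ s, ENNReal.ofReal (1 / (1 + s)) ∂μ < ⊤) (k : ℝ) {t : ℝ} (ht : 0 < t) :
    ∫⁻ s, ENNReal.ofReal (k / (t + s)) ∂μ < ⊤ := by
  have hbound : ∀ᵐ s ∂μ, ENNReal.ofReal (k / (t + s))
      ≤ ENNReal.ofReal (|k| * (1 + t⁻¹)) * ENNReal.ofReal (1 / (1 + s)) := by
    filter_upwards [ae_gt_of_measure_Iic_eq_zero hsupp] with s hs
    rw [← ENNReal.ofReal_mul (by positivity)]
    refine ENNReal.ofReal_le_ofReal ?_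
    have h : 1 / (t + s) ≤ (1 + t⁻¹) * (1 / (1 + s)) := by
      rw [mul_one_div, div_le_div_iff₀ (by positivity) (by positivity)]
      field_simp
      nlinarith
    calc k / (t + s) ≤ |k| * (1 / (t + s)) := by
          rw [mul_one_div]; gcongr; exact le_abs_self k
      _ ≤ |k| * ((1 + t⁻¹) * (1 / (1 + s))) := by gcongr
      _ = |k| * (1 + t⁻¹) * (1 / (1 + s)) := by ring
  calc _ ≤ ∫⁻ s, ENNReal.ofReal (|k| * (1 + t⁻¹)) * ENNReal.ofReal (1 / (1 + s)) ∂μ :=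
        lintegral_mono_ae hbound
    _ = ENNReal.ofReal (|k| * (1 + t⁻¹)) * ∫⁻ s, ENNReal.ofReal (1 / (1 + s)) ∂μ :=
        lintegral_const_mul' _ _ ENNReal.ofReal_ne_top
    _ < ⊤ := ENNReal.mul_lt_top ENNReal.ofReal_lt_top hμ

theorem integral_div_add_eq_toReal (hsupp : μ (Iic 0) = 0) {k : ℝ} (hk : 0 ≤ k) {t : ℝ}
    (ht : 0 < t) :
    ∫ s, k / (t + s) ∂μ = (∫⁻ s, ENNReal.ofReal (k / (t + s)) ∂μ).toReal :=
  integral_eq_lintegral_of_nonneg_ae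
    ((ae_gt_of_measure_Iic_eq_zero hsupp).mono fun s hs => by positivity)
    (by fun_prop : Measurable fun s : ℝ => k / (t + s)).aestronglyMeasurable

theorem tendsto_lintegral_sq_sub_one_div_add_nhdsGT (hsupp : μ (Iic 0) = 0) :
    Tendsto (fun t => ∫⁻ s, ENNReal.ofReal ((t - 1) ^ 2 / (t + s)) ∂μ) (𝓝[>] 0)
      (𝓝 (∫⁻ s, ENNReal.ofReal s⁻¹ ∂μ)) := by
  refine tendsto_lintegral_of_tendsto_of_le (fun t => by fun_prop) ?_ ?_
  · filter_upwards [Ioo_mem_nhdsGT (zero_lt_two' ℝ)] with t ht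
    filter_upwards [ae_gt_of_measure_Iic_eq_zero hsupp] with s hs
    refine ENNReal.ofReal_le_ofReal ?_
    rw [← one_div]
    have : (t - 1) ^ 2 ≤ 1 := by nlinarith [ht.1, ht.2]
    gcongr
    linarith [ht.1]
  · filter_upwards [ae_gt_of_measure_Iic_eq_zero hsupp] with s hs
    refine ENNReal.tendsto_ofReal ?_
    have : ContinuousAt (fun t : ℝ => (t - 1) ^ 2 / (t + s)) 0 := by
      fun_prop (disch := simpa using hs.ne')
    simpa using this.tendsto.mono_left nhdsWithin_le_nhds

theorem tendsto_lintegral_sq_sub_one_div_div_add_atTop (hsupp : μ (Iic 0) = 0) :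
    Tendsto (fun t => ∫⁻ s, ENNReal.ofReal ((t - 1) ^ 2 / t / (t + s)) ∂μ) atTop
      (𝓝 (μ (Ioi 0))) := by
  rw [measure_congr (ae_eq_univ.2 (by rwa [compl_Ioi])), ← lintegral_one]
  refine tendsto_lintegral_of_tendsto_of_le (fun t => by fun_prop) ?_ ?_
  · filter_upwards [eventually_ge_atTop 1] with t ht
    filter_upwards [ae_gt_of_measure_Iic_eq_zero hsupp] with s hs
    rw [← ENNReal.ofReal_one]
    refine ENNReal.ofReal_le_ofReal ?_
    rw [div_div, div_le_one (by positivity)]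
    nlinarith
  · filter_upwards [ae_gt_of_measure_Iic_eq_zero hsupp] with s hs
    rw [← ENNReal.ofReal_one]
    refine ENNReal.tendsto_ofReal ?_
    have hcont : ContinuousAt (fun u : ℝ => (1 - u) ^ 2 / (1 + s * u)) 0 := by
      fun_prop (disch := simp)
    have hlim := hcont.tendsto.comp tendsto_inv_atTop_zero
    simp only [sub_zero, one_pow, mul_zero, add_zero, div_one] at hlim
    refine hlim.congr' ?_
    filter_upwards [eventually_gt_atTop 0] with t ht
    simp only [Function.comp_apply]
    field_simp

end IntegralRepresentation

theorem tendsto_sq_sub_one_div_nhdsGT_zero :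
    Tendsto (fun t : ℝ => (t - 1) ^ 2 / t) (𝓝[>] 0) atTop := by
  have hnum : Tendsto (fun t : ℝ => (t - 1) ^ 2) (𝓝[>] 0) (𝓝 1) := by
    have : ContinuousAt (fun t : ℝ => (t - 1) ^ 2) 0 := by fun_prop
    simpa using this.tendsto.mono_left nhdsWithin_le_nhds
  simpa only [div_eq_mul_inv] using hnum.pos_mul_atTop one_pos tendsto_inv_nhdsGT_zero

theorem tendsto_sq_sub_one_div_atTop :
    Tendsto (fun t : ℝ => (t - 1) ^ 2 / t) atTop atTop := by
  refine tendsto_atTop_mono' _ ?_ (tendsto_atTop_add_const_right _ (-2) tendsto_id)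
  filter_upwards [eventually_gt_atTop 0] with t ht
  rw [id, le_div_iff₀ ht]
  nlinarith

theorem tendsto_integral_repr_nhdsGT_zero (a b c d : ℝ) (hd : 0 ≤ d)
    (μ : Measure ℝ) (hsupp : μ (Iic 0) = 0)
    (hμ : ∫⁻ s, ENNReal.ofReal (1 / (1 + s)) ∂μ < ⊤) (f : ℝ → ℝ)
    (hf : ∀ t ∈ Ioi (0 : ℝ),
      f t = a + b * (t - 1) + c * (t - 1) ^ 2 + d * ((t - 1) ^ 2 / t)
        + ∫ s, (t - 1) ^ 2 / (t + s) ∂μ) :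
    Tendsto (fun t : ℝ => (f t : EReal)) (𝓝[>] 0)
      (𝓝 (((a - b + c : ℝ) : EReal) + (⊤ : EReal) * (d : EReal)
        + ((∫⁻ s, ENNReal.ofReal s⁻¹ ∂μ : ℝ≥0∞) : EReal))) := by
  have hpoly : Tendsto (fun t : ℝ => a + b * (t - 1) + c * (t - 1) ^ 2) (𝓝[>] 0)
      (𝓝 (a - b + c)) := by
    have : ContinuousAt (fun t : ℝ => a + b * (t - 1) + c * (t - 1) ^ 2) 0 := by fun_prop
    simpa [sub_eq_add_neg] using this.tendsto.mono_left nhdsWithin_le_nhds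
  have hpos : Tendsto (fun t => ENNReal.ofReal d * ENNReal.ofReal ((t - 1) ^ 2 / t)
      + ∫⁻ s, ENNReal.ofReal ((t - 1) ^ 2 / (t + s)) ∂μ) (𝓝[>] 0)
      (𝓝 (ENNReal.ofReal d * ⊤ + ∫⁻ s, ENNReal.ofReal s⁻¹ ∂μ)) :=
    (ENNReal.Tendsto.const_mul (tendsto_ofReal_atTop.comp tendsto_sq_sub_one_div_nhdsGT_zero)
      (Or.inr ofReal_ne_top)).add (tendsto_lintegral_sq_sub_one_div_add_nhdsGT hsupp)
  rw [EReal.top_mul_coe_of_nonneg hd, add_assoc, ← EReal.coe_ennreal_add]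
  refine EReal.tendsto_coe_add_toReal hpoly hpos ?_
  filter_upwards [self_mem_nhdsWithin] with t (ht : 0 < t)
  have hfin := lintegral_ofReal_div_add_lt_top hsupp hμ ((t - 1) ^ 2) ht
  refine ⟨add_ne_top.2 ⟨mul_ne_top ofReal_ne_top ofReal_ne_top, hfin.ne⟩, ?_⟩
  rw [hf t ht, integral_div_add_eq_toReal hsupp (sq_nonneg _) ht,
    toReal_add (mul_ne_top ofReal_ne_top ofReal_ne_top) hfin.ne, toReal_mul,
    toReal_ofReal hd, toReal_ofReal (by positivity)]
  ring

theorem tendsto_integral_repr_div_atTop (a b c d : ℝ) (hc : 0 ≤ c)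
    (μ : Measure ℝ) (hsupp : μ (Iic 0) = 0)
    (hμ : ∫⁻ s, ENNReal.ofReal (1 / (1 + s)) ∂μ < ⊤) (f : ℝ → ℝ)
    (hf : ∀ t ∈ Ioi (0 : ℝ),
      f t = a + b * (t - 1) + c * (t - 1) ^ 2 + d * ((t - 1) ^ 2 / t)
        + ∫ s, (t - 1) ^ 2 / (t + s) ∂μ) :
    Tendsto (fun t : ℝ => ((f t / t : ℝ) : EReal)) atTop
      (𝓝 (((b + d : ℝ) : EReal) + (⊤ : EReal) * (c : EReal)
        + ((μ (Ioi 0) : ℝ≥0∞) : EReal))) := by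
  have hreal : Tendsto (fun t : ℝ => a * t⁻¹ + b * (1 - t⁻¹) + d * (1 - t⁻¹) ^ 2) atTop
      (𝓝 (b + d)) := by
    have : ContinuousAt (fun u : ℝ => a * u + b * (1 - u) + d * (1 - u) ^ 2) 0 := by fun_prop
    simpa [Function.comp_def] using this.tendsto.comp tendsto_inv_atTop_zero
  have hpos : Tendsto (fun t => ENNReal.ofReal c * ENNReal.ofReal ((t - 1) ^ 2 / t)
      + ∫⁻ s, ENNReal.ofReal ((t - 1) ^ 2 / t / (t + s)) ∂μ) atTop
      (𝓝 (ENNReal.ofReal c * ⊤ + μ (Ioi 0))) :=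
    (ENNReal.Tendsto.const_mul (tendsto_ofReal_atTop.comp tendsto_sq_sub_one_div_atTop)
      (Or.inr ofReal_ne_top)).add (tendsto_lintegral_sq_sub_one_div_div_add_atTop hsupp)
  rw [EReal.top_mul_coe_of_nonneg hc, add_assoc, ← EReal.coe_ennreal_add]
  refine EReal.tendsto_coe_add_toReal hreal hpos ?_
  filter_upwards [eventually_gt_atTop 0] with t ht
  have hfin := lintegral_ofReal_div_add_lt_top hsupp hμ ((t - 1) ^ 2 / t) ht
  refine ⟨add_ne_top.2 ⟨mul_ne_top ofReal_ne_top ofReal_ne_top, hfin.ne⟩, ?_⟩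
  have hdiv : (∫ s, (t - 1) ^ 2 / (t + s) ∂μ) / t = ∫ s, (t - 1) ^ 2 / t / (t + s) ∂μ := by
    simp_rw [← integral_div, div_right_comm]
  rw [toReal_add (mul_ne_top ofReal_ne_top ofReal_ne_top) hfin.ne, toReal_mul,
    toReal_ofReal hc, toReal_ofReal (by positivity),
    ← integral_div_add_eq_toReal hsupp (by positivity) ht, ← hdiv, hf t ht]
  field_simp
  ring

/-- Boundary values of the integral representation of an operator convex function:
if `f(t) = a + b(t−1) + c(t−1)² + d(t−1)²/t + ∫_{(0,∞)} (t−1)²/(t+s) dμ(s)` with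
`c, d ≥ 0` and `∫ 1/(1+s) dμ(s) < ∞`, then
`f(0⁺) = a − b + c + (+∞)·d + ∫ s⁻¹ dμ(s)` and
`f'(∞) = b + (+∞)·c + d + μ((0,∞))` in `(-∞,+∞]` (with `(+∞)·0 = 0`). -/
theorem integral_repr_boundary_values
    (a b c d : ℝ) (hc : 0 ≤ c) (hd : 0 ≤ d)
    (μ : Measure ℝ) (hsupp : μ (Set.Iic 0) = 0)
    (hμ : (∫⁻ s, ENNReal.ofReal (1 / (1 + s)) ∂μ) < ⊤)
    (f : ℝ → ℝ)
    (hf : ∀ t ∈ Set.Ioi (0 : ℝ),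
      f t = a + b * (t - 1) + c * (t - 1) ^ 2 + d * ((t - 1) ^ 2 / t)
        + ∫ s, (t - 1) ^ 2 / (t + s) ∂μ) :
    Tendsto (fun t : ℝ => (f t : EReal)) (nhdsWithin 0 (Set.Ioi 0))
      (nhds (((a - b + c : ℝ) : EReal) + (⊤ : EReal) * ((d : ℝ) : EReal)
        + ((∫⁻ s, ENNReal.ofReal s⁻¹ ∂μ : ℝ≥0∞) : EReal))) ∧
    Tendsto (fun t : ℝ => ((f t / t : ℝ) : EReal)) atTop
      (nhds (((b + d : ℝ) : EReal) + (⊤ : EReal) * ((c : ℝ) : EReal)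
        + ((μ (Set.Ioi 0) : ℝ≥0∞) : EReal))) :=
  ⟨tendsto_integral_repr_nhdsGT_zero a b c d hd μ hsupp hμ f hf,
    tendsto_integral_repr_div_atTop a b c d hc μ hsupp hμ f hf⟩
end
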